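/- Let k be a positive integer and suppose either 2k+1 = p^v for a prime p and positive integer v, or 2k+1 = p·q for two distinct primes p and q. Then every k-matrix is invertible: for every vector v : Fin (2k+1) → ℂ whose entries all lie in {0,1} and which takes the value 1 at exactly k indices, the circulant matrix with entries M i j = v (i − j) has nonzero determinant. (Theorem 11 of the paper.) -/

import Mathlib

set_option linter.unusedSectionVars false

open Polynomial Finset AddMonoidAlgebra


lemma geomS_add (a b : ℕ) : (∑ i ∈ range (a+b), (X:ℤ[X])^i)
    = (∑ i ∈ range a, X^i) + X^a * ∑ i ∈ range b, X^i := by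
  induction b with
  | zero => simp
  | succ b ih => rw [← Nat.add_assoc, sum_range_succ, ih, sum_range_succ]; ring

lemma isCoprime_geomS_aux : ∀ N m n : ℕ, m + n ≤ N → Nat.Coprime m n →
    IsCoprime (∑ i ∈ range m, (X:ℤ[X])^i) (∑ i ∈ range n, X^i) := by
  intro N
  induction N with
  | zero =>
    intro m n hmn h
    have hm : m = 0 := by omega
    have hn : n = 0 := by omega
    subst hm; subst hn; simp [Nat.Coprime] at h
  | succ N ih =>
    intro m n hmn h
    rcases Nat.eq_zero_or_pos m with rfl | hm
    · have : n = 1 := by simpa [Nat.Coprime] using h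
      subst this; simpa using isCoprime_one_right
    rcases Nat.eq_zero_or_pos n with rfl | hn
    · have : m = 1 := by simpa [Nat.Coprime] using h
      subst this; simpa using isCoprime_one_left
    have hGX : ∀ m : ℕ, 0 < m → IsCoprime (∑ i ∈ range m, (X:ℤ[X])^i) X := by
      intro m hm
      refine ⟨1, -(∑ i ∈ range (m-1), X^i), ?_⟩
      have h1 : m = 1 + (m - 1) := by omega
      rw [one_mul]
      nth_rewrite 1 [h1]
      rw [geomS_add]; simp; ring
    rcases lt_trichotomy m n with hlt | rfl | hlt
    · have h2 : n = m + (n - m) := by omega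
      have hcop : Nat.Coprime m (n - m) :=
        (Nat.coprime_sub_self_right (by omega)).mpr h
      have IH := ih m (n - m) (by omega) hcop
      have base : IsCoprime (∑ i ∈ range m, (X:ℤ[X])^i) (X^m * ∑ i ∈ range (n-m), X^i) :=
        ((hGX m hm).pow_right).mul_right IH
      have := base.add_mul_left_right 1
      rw [h2, geomS_add]
      simpa [mul_one, add_comm] using this
    · have : m = 1 := by simpa [Nat.Coprime] using h
      subst this; simpa using isCoprime_one_left
    · have h2 : m = n + (m - n) := by omega
      have hcop : Nat.Coprime (m - n) n :=
        ((Nat.coprime_sub_self_right (by omega)).mpr h.symm).symm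
      have IH := ih (m - n) n (by omega) hcop
      have base : IsCoprime (X^n * ∑ i ∈ range (m-n), (X:ℤ[X])^i) (∑ i ∈ range n, X^i) :=
        (((hGX n hn).pow_right).mul_right IH.symm).symm
      have := base.mul_add_left_left 1
      rw [h2, geomS_add]
      simpa [mul_one, add_comm] using this

lemma isCoprime_geomS {m n : ℕ} (h : Nat.Coprime m n) :
    IsCoprime (∑ i ∈ range m, (X:ℤ[X])^i) (∑ i ∈ range n, X^i) :=
  isCoprime_geomS_aux (m+n) m n le_rfl h


lemma dvd_mul_prime_classify {p q d : ℕ} (hp : p.Prime) (hq : q.Prime)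
    (hd : d ∣ p * q) : d = 1 ∨ d = p ∨ d = q ∨ d = p * q := by
  by_cases hpd : p ∣ d
  · obtain ⟨e, rfl⟩ := hpd
    have he : e ∣ q := by
      have := (mul_dvd_mul_iff_left (a := p) hp.pos.ne').mp hd
      exact this
    rcases (Nat.Prime.eq_one_or_self_of_dvd hq e he) with rfl | rfl
    · simp
    · tauto
  · have hcop : Nat.Coprime p d := (Nat.Prime.coprime_iff_not_dvd hp).mpr hpd
    have : d ∣ q := (Nat.Coprime.dvd_of_dvd_mul_left (Nat.Coprime.symm hcop) hd)
    rcases (Nat.Prime.eq_one_or_self_of_dvd hq d this) with rfl | rfl <;> tauto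

lemma divisors_mul_primes {p q : ℕ} (hp : p.Prime) (hq : q.Prime) (hpq : p ≠ q) :
    (p * q).divisors = {1, p, q, p * q} := by
  ext d
  simp only [Nat.mem_divisors, Finset.mem_insert, Finset.mem_singleton]
  constructor
  · rintro ⟨hd, -⟩; exact dvd_mul_prime_classify hp hq hd
  · have hpos : 0 < p * q := Nat.mul_pos hp.pos hq.pos
    rintro (rfl | rfl | rfl | rfl)
    · exact ⟨one_dvd _, hpos.ne'⟩
    · exact ⟨dvd_mul_right _ _, hpos.ne'⟩
    · exact ⟨dvd_mul_left _ _, hpos.ne'⟩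
    · exact ⟨dvd_rfl, hpos.ne'⟩

lemma cyclotomic_mul_geom {p q : ℕ} (hp : p.Prime) (hq : q.Prime) (hpq : p ≠ q) :
    (∑ i ∈ range p, (X:ℤ[X])^i) * cyclotomic (p*q) ℤ = ∑ j ∈ range p, (X:ℤ[X])^(q*j) := by
  haveI := Fact.mk hp
  haveI := Fact.mk hq
  have hpos : 0 < p * q := Nat.mul_pos hp.pos hq.pos
  have hprod : (X:ℤ[X])^(p*q) - 1
      = (X - 1) * (∑ i ∈ range p, X^i) * (∑ i ∈ range q, X^i) * cyclotomic (p*q) ℤ := by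
    rw [← prod_cyclotomic_eq_X_pow_sub_one hpos ℤ, divisors_mul_primes hp hq hpq]
    have h1 : (1:ℕ) ∉ ({p, q, p*q} : Finset ℕ) := by
      simp only [Finset.mem_insert, Finset.mem_singleton]
      push_neg
      refine ⟨hp.one_lt.ne, hq.one_lt.ne, ?_⟩
      nlinarith [hp.two_le, hq.two_le]
    have h2 : p ∉ ({q, p*q} : Finset ℕ) := by
      simp only [Finset.mem_insert, Finset.mem_singleton]
      push_neg
      exact ⟨hpq, fun hc => by nlinarith [hp.two_le, hq.two_le]⟩
    have h3 : q ∉ ({p*q} : Finset ℕ) := by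
      simp only [Finset.mem_singleton]
      intro hc; nlinarith [hp.two_le, hq.two_le]
    rw [Finset.prod_insert h1, Finset.prod_insert h2, Finset.prod_insert h3,
      Finset.prod_singleton, cyclotomic_one, cyclotomic_prime, cyclotomic_prime]
    ring
  have hgeom : (∑ j ∈ range p, (X:ℤ[X])^(q*j)) * ((X:ℤ[X])^q - 1) = X^(p*q) - 1 := by
    have := geom_sum_mul ((X:ℤ[X])^q) p
    simpa [← pow_mul, mul_comm] using this
  have hq1 : ((X:ℤ[X])^q - 1) = (∑ i ∈ range q, X^i) * (X - 1) := (geom_sum_mul _ q).symm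
  have hne : ((X:ℤ[X])^q - 1) ≠ 0 := by
    intro hc
    have := congrArg (eval 0) hc
    simp [zero_pow hq.pos.ne'] at this
  apply mul_right_cancel₀ hne
  rw [hgeom, hprod, hq1]
  ring


lemma pow_fin_add {n : ℕ} [NeZero n] {ω : ℂ} (hω : ω ^ n = 1) (a b : Fin n) :
    ω ^ (((a + b) : Fin n) : ℕ) = ω ^ (a : ℕ) * ω ^ (b : ℕ) := by
  rw [← pow_add]
  conv_rhs => rw [← Nat.mod_add_div (a.1 + b.1) n]
  rw [pow_add, pow_mul, hω, one_pow, mul_one]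
  congr 1

lemma circulant_det_root {n : ℕ} [NeZero n] (v : Fin n → ℂ)
    (hdet : (Matrix.circulant v).det = 0) :
    ∃ ω : ℂ, ω ^ n = 1 ∧ ∑ i : Fin n, v i * ω ^ (i : ℕ) = 0 := by
  by_contra hno
  push_neg at hno
  obtain ⟨x, hx0, hxmul⟩ := Matrix.exists_mulVec_eq_zero_iff.mpr hdet
  have hn : 0 < n := Nat.pos_of_ne_zero (NeZero.ne n)
  set P : ℂ[X] := ∑ j : Fin n, monomial (j : ℕ) (x j) with hP
  have hPcoeff : ∀ j0 : Fin n, P.coeff (j0 : ℕ) = x j0 := by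
    intro j0
    rw [hP, finset_sum_coeff]
    rw [Finset.sum_eq_single j0]
    · rw [coeff_monomial, if_pos rfl]
    · intro j _ hne
      rw [coeff_monomial, if_neg (fun hc => hne (Fin.ext hc))]
    · intro hc
      exact absurd (Finset.mem_univ j0) hc
  have hPne : P ≠ 0 := by
    obtain ⟨j0, hj0⟩ : ∃ j0, x j0 ≠ 0 := by
      by_contra hc
      push_neg at hc
      exact hx0 (funext hc)
    intro hc
    apply hj0
    rw [← hPcoeff j0, hc, Polynomial.coeff_zero]
  have hdegP : P.natDegree ≤ n - 1 := by
    apply natDegree_sum_le_of_forall_le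
    intro j _
    exact (natDegree_monomial_le _).trans (by omega)
  have hPeval : ∀ ω : ℂ, P.eval ω = ∑ j : Fin n, x j * ω ^ (j:ℕ) := by
    intro ω
    rw [hP, eval_finset_sum]
    exact Finset.sum_congr rfl fun j _ => by rw [eval_monomial]
  have hroot : ∀ ω : ℂ, ω ^ n = 1 → P.eval ω = 0 := by
    intro ω hω
    have hzero : ∀ i : Fin n, ∑ j : Fin n, v (i - j) * x j = 0 := by
      intro i
      have := congrFun hxmul i
      simpa [Matrix.mulVec, dotProduct, Matrix.circulant_apply] using this
    have hconv : (∑ d : Fin n, v d * ω^(d:ℕ)) * (∑ j : Fin n, x j * ω^(j:ℕ))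
        = ∑ i : Fin n, (∑ j : Fin n, v (i - j) * x j) * ω^(i:ℕ) := by
      have lhs_eq : (∑ d : Fin n, v d * ω^(d:ℕ)) * (∑ j : Fin n, x j * ω^(j:ℕ))
          = ∑ j : Fin n, ∑ d : Fin n, v d * ω^(d:ℕ) * (x j * ω^(j:ℕ)) := by
        rw [Finset.sum_mul_sum]
        exact Finset.sum_comm
      have rhs_eq : ∑ i : Fin n, (∑ j : Fin n, v (i - j) * x j) * ω^(i:ℕ)
          = ∑ j : Fin n, ∑ i : Fin n, v (i - j) * x j * ω^(i:ℕ) := by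
        simp_rw [Finset.sum_mul]
        exact Finset.sum_comm
      rw [lhs_eq, rhs_eq]
      apply Finset.sum_congr rfl
      intro j _
      apply Fintype.sum_equiv (Equiv.addRight j)
        (fun d => v d * ω^(d:ℕ) * (x j * ω^(j:ℕ)))
        (fun i => v (i - j) * x j * ω^(i:ℕ))
      intro d
      simp only [Equiv.coe_addRight, add_sub_cancel_right]
      rw [pow_fin_add hω]
      ring
    have h0 : (∑ d : Fin n, v d * ω^(d:ℕ)) * (∑ j : Fin n, x j * ω^(j:ℕ)) = 0 := by
      rw [hconv]
      apply Finset.sum_eq_zero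
      intro i _
      rw [hzero i, zero_mul]
    rw [hPeval]
    rcases mul_eq_zero.mp h0 with hc | hc
    · exact absurd hc (hno ω hω)
    · exact hc
  -- P has too many roots
  have hprim := Complex.isPrimitiveRoot_exp n (NeZero.ne n)
  have hcard : (Polynomial.nthRootsFinset n (1:ℂ)).card = n := hprim.card_nthRootsFinset
  have hsub : Polynomial.nthRootsFinset n (1:ℂ) ⊆ P.roots.toFinset := by
    intro z hz
    rw [Multiset.mem_toFinset, mem_roots hPne]
    exact hroot z ((Polynomial.mem_nthRootsFinset hn 1).mp hz)
  have hle : n ≤ P.natDegree := by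
    calc n = (Polynomial.nthRootsFinset n (1:ℂ)).card := hcard.symm
      _ ≤ P.roots.toFinset.card := Finset.card_le_card hsub
      _ ≤ Multiset.card P.roots := P.roots.toFinset_card_le
      _ ≤ P.natDegree := P.card_roots'
  omega


section Fold
variable {n : ℕ} [NeZero n]

local notation "R" => AddMonoidAlgebra ℤ (ZMod n)

noncomputable def tgen : AddMonoidAlgebra ℤ (ZMod n) := AddMonoidAlgebra.single (1 : ZMod n) (1:ℤ)

lemma tgen_pow (m : ℕ) : (tgen (n := n))^m = AddMonoidAlgebra.single ((m : ZMod n)) (1:ℤ) := by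
  rw [tgen, AddMonoidAlgebra.single_pow]
  congr 1
  · simp [nsmul_eq_mul]
  · simp

lemma aeval_tgen_coeff (g : ℤ[X]) (hdeg : g.natDegree < n) (r : ZMod n) :
    (aeval (tgen (n := n)) g).coeff r = g.coeff r.val := by
  rw [aeval_eq_sum_range' hdeg]
  have : ∀ m : ℕ, g.coeff m • (tgen (n := n))^m
      = AddMonoidAlgebra.single ((m : ZMod n)) (g.coeff m) := by
    intro m
    rw [tgen_pow]
    ext y
    simp [Finsupp.single_apply]
  simp_rw [this]
  rw [AddMonoidAlgebra.coeff_sum]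
  simp_rw [AddMonoidAlgebra.coeff_single]
  rw [Finset.sum_apply']
  rw [Finset.sum_eq_single r.val]
  · rw [ZMod.natCast_rightInverse r]
    simp [Finsupp.single_apply]
  · intro m hm hne
    have : ((m : ZMod n)) ≠ r := by
      intro hc
      apply hne
      have := congrArg ZMod.val hc
      rwa [ZMod.val_cast_of_lt (Finset.mem_range.mp hm)] at this
    simp [Finsupp.single_apply, this]
  · intro hr
    exact absurd (Finset.mem_range.mpr (ZMod.val_lt r)) hr

lemma period_all (c : ZMod n) (f : AddMonoidAlgebra ℤ (ZMod n))
    (hf : AddMonoidAlgebra.single c (1:ℤ) * f = f) :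
    ∀ (y z : ZMod n), f.coeff (y + c * z) = f.coeff y := by
  have step : ∀ y : ZMod n, f.coeff (y + c) = f.coeff y := by
    intro y
    have h2 := AddMonoidAlgebra.coeff_single_mul_apply (r := (1:ℤ)) (g := c) (x := f) (h := y + c)
    rw [hf, one_mul, show -c + (y + c) = y by ring] at h2
    exact h2
  have stepn : ∀ (m : ℕ) (y : ZMod n), f.coeff (y + c * m) = f.coeff y := by
    intro m
    induction m with
    | zero => simp
    | succ m ih =>
      intro y
      have : y + c * ((m:ZMod n)+1) = (y + c) + c * m := by ring
      rw [Nat.cast_add, Nat.cast_one, this, ih, step]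
  intro y z
  have := stepn z.val y
  rwa [ZMod.natCast_rightInverse z] at this

lemma zmod_sum_split {a b : ℕ} (hn : n = a * b) (c : ZMod n → ℤ) :
    ∑ x : ZMod n, c x = ∑ i ∈ range a, ∑ j ∈ range b, c ((i + a*j : ℕ) : ZMod n) := by
  have ha : 0 < a := by
    rcases Nat.eq_zero_or_pos a with rfl | h
    · exact absurd (by simpa using hn) (NeZero.ne n)
    · exact h
  have hb : 0 < b := by
    rcases Nat.eq_zero_or_pos b with rfl | h
    · exact absurd (by simpa using hn) (NeZero.ne n)
    · exact h
  rw [← Finset.sum_product']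
  apply Finset.sum_nbij' (i := fun x => (x.val % a, x.val / a))
      (j := fun ij => ((ij.1 + a * ij.2 : ℕ) : ZMod n))
  · intro x _
    simp only [Finset.mem_product, Finset.mem_range]
    constructor
    · exact Nat.mod_lt _ ha
    · have hx : x.val < a * b := hn ▸ ZMod.val_lt x
      exact Nat.div_lt_of_lt_mul (by omega)
  · intro ij _
    exact Finset.mem_univ _
  · intro x _
    simp [Nat.mod_add_div, ZMod.natCast_rightInverse x]
  · intro ij hij
    simp only [Finset.mem_product, Finset.mem_range] at hij
    have hlt : ij.1 + a * ij.2 < n := by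
      rw [hn]
      calc ij.1 + a * ij.2 < a + a * ij.2 := by omega
        _ = a * (ij.2 + 1) := by ring
        _ ≤ a * b := Nat.mul_le_mul_left a (Nat.succ_le_of_lt hij.2)
    have hv : ((((ij.1 + a * ij.2 : ℕ)) : ZMod n)).val = ij.1 + a * ij.2 :=
      ZMod.val_cast_of_lt hlt
    have h1 : ((((ij.1 + a * ij.2 : ℕ)) : ZMod n)).val % a = ij.1 := by
      rw [hv, Nat.add_mul_mod_self_left, Nat.mod_eq_of_lt hij.1]
    have h2 : ((((ij.1 + a * ij.2 : ℕ)) : ZMod n)).val / a = ij.2 := by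
      rw [hv, Nat.add_mul_div_left _ _ ha, Nat.div_eq_of_lt hij.1, Nat.zero_add]
    exact Prod.ext h1 h2
  · intro x _
    congr 1
    simp [Nat.mod_add_div, ZMod.natCast_rightInverse x]

end Fold



lemma case_pq {p q : ℕ} (hp : p.Prime) (hq : q.Prime) (hpq : p ≠ q) (g : ℤ[X])
    (hdvd : cyclotomic (p*q) ℤ ∣ g)
    (h01 : ∀ m : ℕ, g.coeff m = 0 ∨ g.coeff m = 1)
    (hdeg : g.natDegree < p * q) :
    (p:ℤ) ∣ g.eval 1 ∨ (q:ℤ) ∣ g.eval 1 := by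
  set n := p * q with hn
  haveI : NeZero n := ⟨(Nat.mul_pos hp.pos hq.pos).ne'⟩
  obtain ⟨h₀, hg⟩ := hdvd
  obtain ⟨u, w, huw⟩ := isCoprime_geomS ((Nat.coprime_primes hp hq).mpr hpq)
  -- decomposition of g
  have hc1 := cyclotomic_mul_geom hp hq hpq
  have hc2 := cyclotomic_mul_geom hq hp (Ne.symm hpq)
  rw [mul_comm q p] at hc2
  have hgdecomp : g = (u * h₀) * (∑ j ∈ range p, (X:ℤ[X])^(q*j))
      + (w * h₀) * (∑ j ∈ range q, (X:ℤ[X])^(p*j)) := by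
    rw [← hc1, ← hc2, hg]
    linear_combination (-(cyclotomic (p*q) ℤ * h₀)) * huw
  -- move to the group algebra
  set t : AddMonoidAlgebra ℤ (ZMod n) := tgen (n := n) with ht
  set c : AddMonoidAlgebra ℤ (ZMod n) := aeval t g with hcdef
  have hφgeom : ∀ (a b : ℕ), aeval t (∑ j ∈ range a, (X:ℤ[X])^(b*j))
      = ∑ j ∈ range a, AddMonoidAlgebra.single (((b*j : ℕ)) : ZMod n) (1:ℤ) := by
    intro a b
    rw [map_sum]
    exact Finset.sum_congr rfl fun j _ => by rw [map_pow, aeval_X, ← tgen_pow (b*j), pow_mul, ht]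
  set sp : AddMonoidAlgebra ℤ (ZMod n) :=
    ∑ j ∈ range p, AddMonoidAlgebra.single (((q*j : ℕ)) : ZMod n) (1:ℤ) with hsp
  set sq : AddMonoidAlgebra ℤ (ZMod n) :=
    ∑ j ∈ range q, AddMonoidAlgebra.single (((p*j : ℕ)) : ZMod n) (1:ℤ) with hsq
  set A : AddMonoidAlgebra ℤ (ZMod n) := aeval t (u * h₀) * sp with hA
  set B : AddMonoidAlgebra ℤ (ZMod n) := aeval t (w * h₀) * sq with hB
  have hcAB : c = A + B := by
    rw [hcdef, hA, hB, hsp, hsq, ← hφgeom p q, ← hφgeom q p]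
    rw [hgdecomp]
    simp [map_add, map_mul]
  -- shift invariance
  have hshift : ∀ (a b : ℕ), a * b = n →
      AddMonoidAlgebra.single ((b : ZMod n)) (1:ℤ)
        * (∑ j ∈ range a, AddMonoidAlgebra.single (((b*j : ℕ)) : ZMod n) (1:ℤ))
      = ∑ j ∈ range a, AddMonoidAlgebra.single (((b*j : ℕ)) : ZMod n) (1:ℤ) := by
    intro a b hab
    set f : ℕ → AddMonoidAlgebra ℤ (ZMod n) :=
      fun j => AddMonoidAlgebra.single (((b*j : ℕ)) : ZMod n) (1:ℤ) with hfdef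
    have hfstep : ∀ j : ℕ, AddMonoidAlgebra.single ((b : ZMod n)) (1:ℤ) * f j = f (j+1) := by
      intro j
      rw [hfdef]
      simp only []
      rw [AddMonoidAlgebra.single_mul_single, one_mul]
      congr 1
      push_cast
      ring
    rw [Finset.mul_sum]
    refine (Finset.sum_congr rfl (fun j _ => hfstep j)).trans ?_
    have hfp : f a = f 0 := by
      have hba : ((b*a : ℕ) : ZMod n) = ((b*0 : ℕ) : ZMod n) := by
        rw [Nat.mul_comm b a, hab, Nat.mul_zero, Nat.cast_zero]
        exact ZMod.natCast_self n
      rw [hfdef]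
      simp only []
      rw [hba]
    have h1 := Finset.sum_range_succ f a
    have h2 := Finset.sum_range_succ' f a
    rw [h1, hfp] at h2
    -- h2 : ∑ range a f + f 0 = ∑ j ∈ range a, f (j+1) + f 0
    exact (add_right_cancel h2).symm
  have hAshift : AddMonoidAlgebra.single ((q : ZMod n)) (1:ℤ) * A = A := by
    rw [hA, mul_left_comm, hshift p q hn.symm]
  have hBshift : AddMonoidAlgebra.single ((p : ZMod n)) (1:ℤ) * B = B := by
    rw [hB, mul_left_comm, hshift q p ((Nat.mul_comm q p).trans hn.symm)]
  have hAper := period_all _ _ hAshift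
  have hBper := period_all _ _ hBshift
  -- values of c
  have hc01 : ∀ r : ZMod n, c.coeff r = 0 ∨ c.coeff r = 1 := by
    intro r
    rw [hcdef, ht, aeval_tgen_coeff g hdeg]
    exact h01 _
  -- reachability
  have hreach : ∀ r s : ZMod n, ∃ x : ZMod n, A.coeff x = A.coeff r ∧ B.coeff x = B.coeff s := by
    intro r s
    obtain ⟨a, b, hab⟩ := (Nat.isCoprime_iff_coprime.mpr ((Nat.coprime_primes hp hq).mpr hpq))
    have habn : (a : ZMod n) * (p:ℕ) + (b : ZMod n) * (q:ℕ) = 1 := by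
      have := congrArg (fun z : ℤ => (z : ZMod n)) hab
      push_cast at this
      exact this
    refine ⟨r + (q : ZMod n) * ((b : ZMod n) * (s - r)), ?_, ?_⟩
    · exact hAper r _
    · have hx : r + (q : ZMod n) * ((b : ZMod n) * (s - r))
          = s + (p : ZMod n) * ((a : ZMod n) * (r - s)) := by
        linear_combination (s - r) * habn
      rw [hx]
      exact hBper s _
  have haddap : ∀ (f f' : AddMonoidAlgebra ℤ (ZMod n)) (y : ZMod n), (f + f').coeff y = f.coeff y + f'.coeff y :=
    fun f f' y => rfl
  -- dichotomy
  by_cases hAconst : ∀ y y' : ZMod n, A.coeff y = A.coeff y'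
  · -- c has period p, so q ∣ sum
    right
    have hcper : ∀ (y z : ZMod n), c.coeff (y + (p:ZMod n) * z) = c.coeff y := by
      intro y z
      rw [hcAB, haddap, haddap]
      rw [hBper y z, hAconst (y + (p:ZMod n)*z) y]
    have hsum : ∑ x : ZMod n, c.coeff x = ∑ m ∈ range n, g.coeff m := by
      rw [Finset.sum_congr rfl (fun x _ => by rw [hcdef, ht, aeval_tgen_coeff g hdeg])]
      apply Finset.sum_nbij' (i := fun x : ZMod n => x.val) (j := fun m : ℕ => (m : ZMod n))
      · intro x _; exact Finset.mem_range.mpr (ZMod.val_lt x)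
      · intro m _; exact Finset.mem_univ _
      · intro x _; exact ZMod.natCast_rightInverse x
      · intro m hm; exact ZMod.val_cast_of_lt (Finset.mem_range.mp hm)
      · intro x _; rfl
    have heval : g.eval 1 = ∑ x : ZMod n, c.coeff x := by
      rw [hsum, eval_eq_sum_range' hdeg]
      exact Finset.sum_congr rfl fun m _ => by rw [one_pow, mul_one]
    rw [heval, zmod_sum_split hn c.coeff]
    have hinner : ∀ i ∈ range p, ∑ j ∈ range q, c.coeff ((i + p*j : ℕ) : ZMod n) = (q:ℤ) * c.coeff ((i:ℕ) : ZMod n) := by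
      intro i _
      have : ∀ j ∈ range q, c.coeff ((i + p*j : ℕ) : ZMod n) = c.coeff ((i:ℕ) : ZMod n) := by
        intro j _
        have : ((i + p*j : ℕ) : ZMod n) = ((i:ℕ) : ZMod n) + (p:ZMod n) * (j:ZMod n) := by
          push_cast; ring
        rw [this, hcper]
      rw [Finset.sum_congr rfl this, Finset.sum_const, Finset.card_range, nsmul_eq_mul]
    rw [Finset.sum_congr rfl hinner, ← Finset.mul_sum]
    exact Dvd.intro _ rfl
  · -- A not constant forces B constant; c has period q, so p ∣ sum
    left
    push_neg at hAconst
    obtain ⟨r1, r2, hr⟩ := hAconst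
    have hBconst : ∀ y y' : ZMod n, B.coeff y = B.coeff y' := by
      intro t1 t2
      by_contra hB12
      obtain ⟨x11, hx11A, hx11B⟩ := hreach r1 t1
      obtain ⟨x12, hx12A, hx12B⟩ := hreach r1 t2
      obtain ⟨x21, hx21A, hx21B⟩ := hreach r2 t1
      obtain ⟨x22, hx22A, hx22B⟩ := hreach r2 t2
      have e11 := hc01 x11
      have e12 := hc01 x12
      have e21 := hc01 x21
      have e22 := hc01 x22
      rw [hcAB] at e11 e12 e21 e22
      rw [haddap] at e11 e12 e21 e22
      rw [hx11A, hx11B] at e11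
      rw [hx12A, hx12B] at e12
      rw [hx21A, hx21B] at e21
      rw [hx22A, hx22B] at e22
      omega
    have hcper : ∀ (y z : ZMod n), c.coeff (y + (q:ZMod n) * z) = c.coeff y := by
      intro y z
      rw [hcAB, haddap, haddap]
      rw [hAper y z, hBconst (y + (q:ZMod n)*z) y]
    have hsum : ∑ x : ZMod n, c.coeff x = ∑ m ∈ range n, g.coeff m := by
      rw [Finset.sum_congr rfl (fun x _ => by rw [hcdef, ht, aeval_tgen_coeff g hdeg])]
      apply Finset.sum_nbij' (i := fun x : ZMod n => x.val) (j := fun m : ℕ => (m : ZMod n))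
      · intro x _; exact Finset.mem_range.mpr (ZMod.val_lt x)
      · intro m _; exact Finset.mem_univ _
      · intro x _; exact ZMod.natCast_rightInverse x
      · intro m hm; exact ZMod.val_cast_of_lt (Finset.mem_range.mp hm)
      · intro x _; rfl
    have heval : g.eval 1 = ∑ x : ZMod n, c.coeff x := by
      rw [hsum, eval_eq_sum_range' hdeg]
      exact Finset.sum_congr rfl fun m _ => by rw [one_pow, mul_one]
    rw [heval, zmod_sum_split (show n = q * p by rw [hn, mul_comm]) c.coeff]
    have hinner : ∀ i ∈ range q, ∑ j ∈ range p, c.coeff ((i + q*j : ℕ) : ZMod n) = (p:ℤ) * c.coeff ((i:ℕ) : ZMod n) := by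
      intro i _
      have : ∀ j ∈ range p, c.coeff ((i + q*j : ℕ) : ZMod n) = c.coeff ((i:ℕ) : ZMod n) := by
        intro j _
        have : ((i + q*j : ℕ) : ZMod n) = ((i:ℕ) : ZMod n) + (q:ZMod n) * (j:ZMod n) := by
          push_cast; ring
        rw [this, hcper]
      rw [Finset.sum_congr rfl this, Finset.sum_const, Finset.card_range, nsmul_eq_mul]
    rw [Finset.sum_congr rfl hinner, ← Finset.mul_sum]
    exact Dvd.intro _ rfl



lemma no_prime_dvd {p k : ℕ} (hp : p.Prime) (h1 : p ∣ k) (h2 : p ∣ 2*k+1) : False := by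
  have h3 : p ∣ 2*k := Dvd.dvd.mul_left h1 2
  have h4 : p ∣ 1 := by
    have := Nat.dvd_sub h2 h3
    rwa [show 2*k+1-2*k = 1 by omega] at this
  have := Nat.le_of_dvd one_pos h4
  have := hp.two_le
  omega

/-- Theorem 11 of the paper: if `2k+1 = p^v` is a prime power or `2k+1 = p·q` is a
product of two distinct primes, then every `k`-matrix (a `(2k+1)×(2k+1)` circulant
0–1 matrix whose first row has exactly `k` ones) is invertible. -/
theorem kMatrix_invertible (k : ℕ) (hk : 0 < k)
    (h : (∃ p v : ℕ, Nat.Prime p ∧ 0 < v ∧ 2 * k + 1 = p ^ v) ∨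
      (∃ p q : ℕ, Nat.Prime p ∧ Nat.Prime q ∧ p ≠ q ∧ 2 * k + 1 = p * q))
    (v : Fin (2 * k + 1) → ℂ) (hv : ∀ i, v i = 0 ∨ v i = 1)
    (hcard : (Finset.univ.filter (fun i => v i = 1)).card = k) :
    (Matrix.circulant v).det ≠ 0 := by
  intro hdet
  obtain ⟨ω, hω, hsum⟩ := circulant_det_root v hdet
  set S : Finset (Fin (2*k+1)) := Finset.univ.filter (fun i => v i = 1) with hSdef
  set g : ℤ[X] := ∑ i ∈ S, X^(i : ℕ) with hg
  have haeval : ∀ z : ℂ, aeval z g = ∑ i ∈ S, z^(i:ℕ) := by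
    intro z
    rw [hg, map_sum]
    exact Finset.sum_congr rfl fun i _ => by rw [map_pow, aeval_X]
  have hsum' : ∑ i ∈ S, ω^(i:ℕ) = 0 := by
    have hsplit := Finset.sum_filter_add_sum_filter_not Finset.univ
      (fun i => v i = 1) (fun i => v i * ω^(i:ℕ))
    have h1 : ∑ i ∈ S, v i * ω^(i:ℕ) = ∑ i ∈ S, ω^(i:ℕ) := by
      apply Finset.sum_congr rfl
      intro i hi
      rw [(Finset.mem_filter.mp hi).2, one_mul]
    have h2 : ∑ i ∈ Finset.univ.filter (fun i => ¬ v i = 1), v i * ω^(i:ℕ) = 0 := by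
      apply Finset.sum_eq_zero
      intro i hi
      have := (Finset.mem_filter.mp hi).2
      rcases hv i with h0 | h1
      · rw [h0, zero_mul]
      · exact absurd h1 this
    have h3 := hsplit
    rw [h2, add_zero, hsum] at h3
    rw [h1] at h3
    exact h3
  have hg0 : aeval ω g = 0 := by rw [haeval, hsum']
  have hco : ∀ m : ℕ, g.coeff m = 0 ∨ g.coeff m = 1 := by
    intro m
    have hcoeff : g.coeff m = ∑ i ∈ S, if m = (i:ℕ) then 1 else 0 := by
      rw [hg, finset_sum_coeff]
      exact Finset.sum_congr rfl fun i _ => coeff_X_pow _ _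
    by_cases hex : ∃ i ∈ S, (i:ℕ) = m
    · right
      obtain ⟨i0, hi0S, hi0⟩ := hex
      rw [hcoeff, Finset.sum_eq_single i0]
      · rw [if_pos hi0.symm]
      · intro i hiS hine
        rw [if_neg]
        intro hc
        exact hine (Fin.ext (by omega))
      · intro hc; exact absurd hi0S hc
    · left
      rw [hcoeff]
      apply Finset.sum_eq_zero
      intro i hi
      rw [if_neg]
      intro hc
      exact hex ⟨i, hi, hc.symm⟩
  have hdeg : g.natDegree < 2*k+1 := by
    have : g.natDegree ≤ 2*k+1 - 1 := by
      rw [hg]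
      apply natDegree_sum_le_of_forall_le
      intro i _
      rw [natDegree_X_pow]
      omega
    omega
  have heval1 : g.eval 1 = (k:ℤ) := by
    rw [hg, eval_finset_sum]
    simp only [eval_pow, eval_X, one_pow]
    rw [Finset.sum_const, hcard]
    simp
  -- the order of ω
  have hnpos : 0 < 2*k+1 := by omega
  have hfin : IsOfFinOrder ω := isOfFinOrder_iff_pow_eq_one.mpr ⟨2*k+1, hnpos, hω⟩
  have hdpos : 0 < orderOf ω := orderOf_pos_iff.mpr hfin
  have hprim : IsPrimitiveRoot ω (orderOf ω) := IsPrimitiveRoot.orderOf ω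
  have hd_dvd : orderOf ω ∣ 2*k+1 := orderOf_dvd_of_pow_eq_one hω
  by_cases hd1 : orderOf ω = 1
  · have hω1 : ω = 1 := orderOf_eq_one_iff.mp hd1
    rw [hω1] at hsum'
    simp only [one_pow] at hsum'
    rw [Finset.sum_const, hcard] at hsum'
    simp at hsum'
    omega
  · have hcyc : cyclotomic (orderOf ω) ℤ ∣ g := by
      rw [cyclotomic_eq_minpoly hprim hdpos]
      exact minpoly.isIntegrallyClosed_dvd (hprim.isIntegral hdpos) hg0
    have hdvd1 : (cyclotomic (orderOf ω) ℤ).eval 1 ∣ g.eval 1 := by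
      obtain ⟨r, hr⟩ := hcyc
      exact ⟨r.eval 1, by rw [hr, eval_mul]⟩
    rcases h with ⟨p, vv, hpp, hvv, hnpow⟩ | ⟨p, q, hpp, hqq, hpq, hnpq⟩
    · haveI := Fact.mk hpp
      have hdp : orderOf ω ∣ p ^ vv := by rw [← hnpow]; exact hd_dvd
      obtain ⟨e, _, hde⟩ := (Nat.dvd_prime_pow hpp).mp hdp
      rcases Nat.eq_zero_or_pos e with rfl | hepos
      · rw [pow_zero] at hde; exact absurd hde hd1
      obtain ⟨e', rfl⟩ : ∃ e', e = e' + 1 := ⟨e - 1, by omega⟩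
      rw [hde, eval_one_cyclotomic_prime_pow] at hdvd1
      rw [heval1] at hdvd1
      have hpk : p ∣ k := Int.natCast_dvd_natCast.mp hdvd1
      exact no_prime_dvd hpp hpk (by rw [hnpow]; exact dvd_pow_self p (by omega))
    · have hdpq : orderOf ω ∣ p * q := by rw [← hnpq]; exact hd_dvd
      have hdclass := dvd_mul_prime_classify hpp hqq hdpq
      rcases hdclass with hd' | hd' | hd' | hd'
      · exact hd1 hd'
      · haveI := Fact.mk hpp
        rw [hd', eval_one_cyclotomic_prime, heval1] at hdvd1
        exact no_prime_dvd hpp (Int.natCast_dvd_natCast.mp hdvd1)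
          (by rw [hnpq]; exact dvd_mul_right p q)
      · haveI := Fact.mk hqq
        rw [hd', eval_one_cyclotomic_prime, heval1] at hdvd1
        exact no_prime_dvd hqq (Int.natCast_dvd_natCast.mp hdvd1)
          (by rw [hnpq]; exact dvd_mul_left q p)
      · rw [hd'] at hcyc
        have := case_pq hpp hqq hpq g hcyc hco (by rw [← hnpq]; exact hdeg)
        rw [heval1] at this
        rcases this with hdp | hdq
        · exact no_prime_dvd hpp (Int.natCast_dvd_natCast.mp hdp)
            (by rw [hnpq]; exact dvd_mul_right p q)
        · exact no_prime_dvd hqq (Int.natCast_dvd_natCast.mp hdq)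
            (by rw [hnpq]; exact dvd_mul_left q p)
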